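/- arXiv:2406.13311 — 2 statements merged into one kernel-verified Lean document; each statement's English description precedes it below -/
import Mathlib

section
/- Let λ > 0, let a, b, c be positive reals with c − a − b − 1 > 0, and let η ∈ ℂ with |η| < 1. Define g on 𝔻 by the convergent series g(z) = η · Σ_{n=2}^∞ [((a)_{n−2}(b)_{n−2}) / ((c)_{n−2} (n−1)!)] z^n, where (x)_m denotes the Pochhammer symbol, and set h(z) = z. If |η| · Σ_{n=0}^∞ ((a)_n (b)_n)/(n! (c)_n) < λ, then the harmonic function f_4 = h + conj∘g (equivalently f_4(z) = z + conj(η z ∫_0^z F(a,b;c;τ) dτ), where F is the Gaussian hypergeometric function) belongs to Ω_H^0(λ). -/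
open Complex

noncomputable section

/-- The open unit disk in the complex plane. -/
def unitDisk : Set ℂ := {z : ℂ | ‖z‖ < 1}

/-- The class `Ω_H^0(λ)` of harmonic mappings `f = h + conj ∘ g`. -/
def OmegaH0 (lam : ℝ) (h g : ℂ → ℂ) : Prop :=
  AnalyticOnNhd ℂ h unitDisk ∧ AnalyticOnNhd ℂ g unitDisk ∧
    h 0 = 0 ∧ deriv h 0 = 1 ∧ g 0 = 0 ∧ deriv g 0 = 0 ∧
    ∀ z ∈ unitDisk,
      ‖h z - z * deriv h z‖ < lam - ‖g z - z * deriv g z‖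

/-- The Pochhammer symbol \`(x)_n = x (x+1) ⋯ (x+n-1)\`. -/
def poch (x : ℝ) (n : ℕ) : ℝ := ∏ k ∈ Finset.range n, (x + k)

lemma poch_pos {x : ℝ} (hx : 0 < x) (n : ℕ) : 0 < poch x n := by
  unfold poch
  exact Finset.prod_pos fun k _ => by positivity

lemma poch_succ (x : ℝ) (n : ℕ) : poch x (n + 1) = poch x n * (x + n) :=
  Finset.prod_range_succ _ _

lemma poly_ineq {a b c : ℝ} (ha : 0 < a) (hb : 0 < b) (hc : 0 < c)
    (habc : 0 < c - a - b - 1) {x : ℝ} (hx1 : 1 ≤ x)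
    (hx2 : 3 * (4 * (a + b) + 4 * (a * b) + 1) ≤ (c - a - b - 1) * x) :
    (a + x) * (b + x) * (x + 2) ^ 2 ≤ (x + 1) ^ 3 * (c + x) := by
  nlinarith [mul_le_mul_of_nonneg_right hx2 (sq_nonneg x), sq_nonneg x,
    mul_pos ha hb, mul_le_mul_of_nonneg_left hx1 (mul_pos ha hb).le,
    mul_le_mul_of_nonneg_left (mul_le_mul hx1 hx1 zero_le_one (le_trans zero_le_one hx1))
      (mul_pos ha hb).le,
    mul_nonneg (mul_nonneg ha.le hb.le) (le_trans zero_le_one hx1), mul_pos (mul_pos ha hb) hc,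
    mul_nonneg (add_pos ha hb).le (sq_nonneg (x - 1)), hc.le, ha.le, hb.le]

lemma summable_U {a b c : ℝ} (ha : 0 < a) (hb : 0 < b) (hc : 0 < c)
    (habc : 0 < c - a - b - 1) :
    Summable (fun n : ℕ => poch a n * poch b n / (n.factorial * poch c n)) := by
  set U : ℕ → ℝ := fun n => poch a n * poch b n / (n.factorial * poch c n) with hU
  have hUpos : ∀ n, 0 < U n := by
    intro n
    have h1 := poch_pos ha n
    have h2 := poch_pos hb n
    have h3 := poch_pos hc n
    have h4 : (0:ℝ) < n.factorial := by exact_mod_cast n.factorial_pos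
    exact div_pos (mul_pos h1 h2) (mul_pos h4 h3)
  -- the ratio recursion
  have key : ∀ n : ℕ, U (n + 1) * (((n:ℝ) + 1) * (c + n)) = U n * ((a + n) * (b + n)) := by
    intro n
    have hfac : ((n+1).factorial : ℝ) = ((n:ℝ) + 1) * n.factorial := by
      rw [Nat.factorial_succ]; push_cast; ring
    have h3 : poch c n ≠ 0 := (poch_pos hc n).ne'
    have h4 : (n.factorial : ℝ) ≠ 0 := by positivity
    have hcn : c + (n:ℝ) ≠ 0 := by positivity
    simp only [hU, poch_succ, hfac]
    field_simp
  -- explicit N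
  set K : ℝ := 3 * (4 * (a + b) + 4 * (a * b) + 1) with hK
  set N : ℕ := ⌈K / (c - a - b - 1)⌉₊ + 1 with hN
  have hNbound : ∀ n : ℕ, N ≤ n → (a + n) * (b + n) * ((n:ℝ) + 2) ^ 2 ≤
      ((n:ℝ) + 1) ^ 3 * (c + n) := by
    intro n hn
    have hx1 : (1:ℝ) ≤ n := by
      have : 1 ≤ n := le_trans (Nat.le_add_left 1 _) hn
      exact_mod_cast this
    have hx2 : K ≤ (c - a - b - 1) * n := by
      have h1 : (⌈K / (c - a - b - 1)⌉₊ : ℝ) ≤ n := by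
        exact_mod_cast le_trans (Nat.le_succ _) hn
      have h2 : K / (c - a - b - 1) ≤ n := le_trans (Nat.le_ceil _) h1
      rw [div_le_iff₀ habc] at h2
      linarith [h2]
    exact poly_ineq ha hb hc habc hx1 hx2
  have hstep : ∀ n : ℕ, N ≤ n → U (n+1) * ((n:ℝ) + 2) ^ 2 ≤ U n * ((n:ℝ) + 1) ^ 2 := by
    intro n hn
    have hP : (0:ℝ) < ((n:ℝ) + 1) * (c + n) := by positivity
    have hU1 : U (n+1) = U n * ((a + n) * (b + n)) / (((n:ℝ) + 1) * (c + n)) := by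
      rw [eq_div_iff hP.ne']; exact key n
    rw [hU1, div_mul_eq_mul_div, div_le_iff₀ hP]
    have h := mul_le_mul_of_nonneg_left (hNbound n hn) (hUpos n).le
    calc U n * ((a + n) * (b + n)) * ((n:ℝ) + 2) ^ 2
        = U n * ((a + n) * (b + n) * ((n:ℝ) + 2) ^ 2) := by ring
      _ ≤ U n * (((n:ℝ) + 1) ^ 3 * (c + n)) := h
      _ = U n * ((n:ℝ) + 1) ^ 2 * (((n:ℝ) + 1) * (c + n)) := by ring
  set C : ℝ := U N * ((N:ℝ) + 1) ^ 2 with hC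
  have hCpos : 0 < C := by
    have := hUpos N; positivity
  have hmono : ∀ n : ℕ, N ≤ n → U n * ((n:ℝ) + 1) ^ 2 ≤ C := by
    intro n hn
    induction n, hn using Nat.le_induction with
    | base => exact le_refl _
    | succ m hm ih =>
      have h1 := hstep m hm
      have h2 : ((m+1 : ℕ):ℝ) + 1 = (m:ℝ) + 2 := by push_cast; ring
      rw [h2]
      exact le_trans h1 ih
  -- comparison with 1/(n+1)^2
  have hsum2 : Summable (fun n : ℕ => C / ((n:ℝ) + 1) ^ 2) := by
    have h0 : Summable (fun n : ℕ => 1 / ((n:ℝ)) ^ 2) :=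
      Real.summable_one_div_nat_pow.mpr one_lt_two
    have h1 : Summable (fun n : ℕ => 1 / ((n+1:ℕ):ℝ) ^ 2) :=
      (summable_nat_add_iff (f := fun n : ℕ => 1 / (n:ℝ) ^ 2) 1).mpr h0
    have h2 : Summable (fun n : ℕ => C * (1 / ((n:ℝ) + 1) ^ 2)) := by
      apply Summable.mul_left C
      refine h1.congr fun n => ?_
      push_cast; ring
    refine h2.congr fun n => ?_
    ring
  have hshift : Summable (fun n : ℕ => U (n + N)) := by
    refine Summable.of_nonneg_of_le (fun n => (hUpos _).le) (fun n => ?_)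
      ((summable_nat_add_iff (f := fun n : ℕ => C / ((n:ℝ) + 1) ^ 2) N).mpr hsum2)
    -- U (n+N) ≤ C / ((n+N)+1)^2
    have h1 := hmono (n + N) (Nat.le_add_left N n)
    rw [le_div_iff₀ (by positivity)]
    exact h1
  exact (summable_nat_add_iff (f := U) N).mp hshift

lemma isOpen_unitDisk : IsOpen unitDisk :=
  isOpen_lt continuous_norm continuous_const

theorem stmt14 (lam : ℝ) (hlam : 0 < lam) (a b c : ℝ)
    (ha : 0 < a) (hb : 0 < b) (hc : 0 < c) (habc : 0 < c - a - b - 1)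
    (η : ℂ) (hη : ‖η‖ < 1)
    (hcond : ‖η‖ *
      (∑' n : ℕ, poch a n * poch b n / (n.factorial * poch c n)) < lam) :
    OmegaH0 lam (fun z => z)
      (fun z => η * ∑' n : ℕ,
        ((poch a n * poch b n / (poch c n * (n + 1).factorial) : ℝ) : ℂ) *
          z ^ (n + 2)) := by
  have hUsum : Summable (fun n : ℕ => poch a n * poch b n / (n.factorial * poch c n)) :=
    summable_U ha hb hc habc
  set U : ℕ → ℝ := fun n => poch a n * poch b n / (n.factorial * poch c n) with hU
  set A : ℕ → ℝ := fun n => poch a n * poch b n / (poch c n * (n + 1).factorial) with hA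
  have hgoal : (fun z : ℂ => η * ∑' n : ℕ,
        ((poch a n * poch b n / (poch c n * (n + 1).factorial) : ℝ) : ℂ) * z ^ (n + 2))
      = (fun z : ℂ => η * ∑' n : ℕ, ((A n : ℝ) : ℂ) * z ^ (n + 2)) := by
    simp only [hA]
  rw [hgoal]
  -- basic positivity facts
  have hUpos : ∀ n, 0 < U n := by
    intro n
    have h1 := poch_pos ha n
    have h2 := poch_pos hb n
    have h3 := poch_pos hc n
    have h4 : (0:ℝ) < n.factorial := by exact_mod_cast n.factorial_pos
    exact div_pos (mul_pos h1 h2) (mul_pos h4 h3)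
  have hApos : ∀ n, 0 < A n := by
    intro n
    have h1 := poch_pos ha n
    have h2 := poch_pos hb n
    have h3 := poch_pos hc n
    have h4 : (0:ℝ) < (n+1).factorial := by exact_mod_cast (n+1).factorial_pos
    exact div_pos (mul_pos h1 h2) (mul_pos h3 h4)
  have hrel : ∀ n : ℕ, A n * ((n:ℝ) + 1) = U n := by
    intro n
    have hfac : ((n+1).factorial : ℝ) = ((n:ℝ) + 1) * n.factorial := by
      rw [Nat.factorial_succ]; push_cast; ring
    have h3 : poch c n ≠ 0 := (poch_pos hc n).ne'
    have h4 : (n.factorial : ℝ) ≠ 0 := by positivity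
    simp only [hA, hU, hfac]
    field_simp
  have hAleU : ∀ n, A n ≤ U n := by
    intro n
    rw [← hrel n]
    nlinarith [hApos n, Nat.cast_nonneg (α := ℝ) n]
  have hA2 : ∀ n, A n * ((n:ℝ) + 2) ≤ 2 * U n := by
    intro n
    rw [← hrel n]
    nlinarith [hApos n, Nat.cast_nonneg (α := ℝ) n]
  -- term-wise derivative lemma
  have hderiv : ∀ z0 ∈ unitDisk,
      HasDerivAt (fun z : ℂ => ∑' n : ℕ, ((A n : ℝ) : ℂ) * z ^ (n + 2))
        (∑' n : ℕ, ((A n * ((n:ℝ) + 2) : ℝ) : ℂ) * z0 ^ (n + 1)) z0 := by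
    intro z0 hz0
    have hz0' : ‖z0‖ < 1 := by
      exact hz0
    set r : ℝ := (‖z0‖ + 1) / 2 with hr
    have hr1 : r < 1 := by rw [hr]; linarith
    have hzr : ‖z0‖ < r := by rw [hr]; linarith [norm_nonneg z0]
    have hrpos : (0:ℝ) < r := lt_of_le_of_lt (norm_nonneg z0) hzr
    refine hasDerivAt_tsum_of_isPreconnected
      (u := fun n : ℕ => 2 * U n)
      (t := Metric.ball (0:ℂ) r) (y₀ := (0:ℂ))
      (g := fun (n : ℕ) (z : ℂ) => ((A n : ℝ) : ℂ) * z ^ (n + 2))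
      (g' := fun (n : ℕ) (z : ℂ) => ((A n * ((n:ℝ) + 2) : ℝ) : ℂ) * z ^ (n + 1))
      (hUsum.mul_left 2) Metric.isOpen_ball (convex_ball _ _).isPreconnected
      (fun n y hy => ?_) (fun n y hy => ?_) (Metric.mem_ball_self hrpos) ?_ ?_
    ·
      have he : n + 2 - 1 = n + 1 := rfl
      have h := (hasDerivAt_pow (n+2) y).const_mul (((A n : ℝ) : ℂ))
      rw [he] at h
      refine h.congr_deriv ?_
      push_cast
      ring
    · rw [Metric.mem_ball, dist_zero_right] at hy
      have h1 : ‖(((A n * ((n:ℝ) + 2)) : ℝ) : ℂ) * y ^ (n + 1)‖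
          = (A n * ((n:ℝ) + 2)) * ‖y‖ ^ (n + 1) := by
        rw [norm_mul, norm_pow, Complex.norm_real, Real.norm_eq_abs,
          _root_.abs_of_nonneg (mul_nonneg (hApos n).le (by positivity))]
      rw [h1]
      calc (A n * ((n:ℝ) + 2)) * ‖y‖ ^ (n + 1)
          ≤ (2 * U n) * 1 :=
            mul_le_mul (hA2 n) (pow_le_one₀ (norm_nonneg y) (le_of_lt (lt_trans hy hr1)))
              (pow_nonneg (norm_nonneg y) _) (by linarith [hUpos n])
        _ = 2 * U n := mul_one _
    · refine summable_zero.congr fun n => ?_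
      simp
    · rw [Metric.mem_ball, dist_zero_right]; exact hzr
  have hgd : ∀ z0 ∈ unitDisk,
      HasDerivAt (fun z : ℂ => η * ∑' n : ℕ, ((A n : ℝ) : ℂ) * z ^ (n + 2))
        (η * ∑' n : ℕ, ((A n * ((n:ℝ) + 2) : ℝ) : ℂ) * z0 ^ (n + 1)) z0 :=
    fun z0 hz0 => (hderiv z0 hz0).const_mul η
  have h0disk : (0:ℂ) ∈ unitDisk := by
    show ‖(0:ℂ)‖ < 1; simp
  refine ⟨fun z _ => analyticAt_id, ?_, ?_, ?_, ?_, ?_, ?_⟩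
  · -- analyticity of g
    refine DifferentiableOn.analyticOnNhd (fun z hz => ?_) isOpen_unitDisk
    exact ((hgd z hz).differentiableAt).differentiableWithinAt
  · simp
  · simp
  · -- g 0 = 0
    have : (∑' n : ℕ, ((A n : ℝ) : ℂ) * (0:ℂ) ^ (n + 2)) = 0 := by
      refine (tsum_congr fun n => ?_).trans tsum_zero
      rw [zero_pow (by omega), mul_zero]
    simp only [this, mul_zero]
  · -- deriv g 0 = 0
    have hD0 : (∑' n : ℕ, ((A n * ((n:ℝ) + 2) : ℝ) : ℂ) * (0:ℂ) ^ (n + 1)) = 0 := by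
      refine (tsum_congr fun n => ?_).trans tsum_zero
      rw [zero_pow (by omega), mul_zero]
    rw [(hgd 0 h0disk).deriv, hD0, mul_zero]
  · -- the main inequality
    intro z hz
    have hznorm : ‖z‖ < 1 := by exact hz
    have hzn : (0:ℝ) ≤ ‖z‖ := norm_nonneg z
    rw [(hgd z hz).deriv]
    have hid : deriv (fun w : ℂ => w) z = 1 := by simp
    rw [hid]
    have hfirst : z - z * 1 = 0 := by ring
    rw [hfirst, norm_zero]
    -- summabilities at z
    have hS1 : Summable (fun n : ℕ => ((A n : ℝ) : ℂ) * z ^ (n + 2)) := by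
      refine Summable.of_norm (Summable.of_nonneg_of_le (fun n => norm_nonneg _)
        (fun n => ?_) hUsum)
      rw [norm_mul, norm_pow, Complex.norm_real, Real.norm_eq_abs,
        _root_.abs_of_nonneg (hApos n).le]
      calc A n * ‖z‖ ^ (n + 2) ≤ A n * 1 := by
            apply mul_le_mul_of_nonneg_left _ (hApos n).le
            exact pow_le_one₀ hzn hznorm.le
        _ = A n := mul_one _
        _ ≤ U n := hAleU n
    have hS2 : Summable (fun n : ℕ => ((A n * ((n:ℝ) + 2) : ℝ) : ℂ) * z ^ (n + 2)) := by
      refine Summable.of_norm (Summable.of_nonneg_of_le (fun n => norm_nonneg _)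
        (fun n => ?_) (hUsum.mul_left 2))
      rw [norm_mul, norm_pow, Complex.norm_real, Real.norm_eq_abs,
        _root_.abs_of_nonneg (mul_nonneg (hApos n).le (by positivity))]
      calc A n * ((n:ℝ) + 2) * ‖z‖ ^ (n + 2) ≤ A n * ((n:ℝ) + 2) * 1 := by
            apply mul_le_mul_of_nonneg_left _ (mul_nonneg (hApos n).le (by positivity))
            exact pow_le_one₀ hzn hznorm.le
        _ = A n * ((n:ℝ) + 2) := mul_one _
        _ ≤ 2 * U n := hA2 n
    have hzD : z * (∑' n : ℕ, ((A n * ((n:ℝ) + 2) : ℝ) : ℂ) * z ^ (n + 1))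
        = ∑' n : ℕ, ((A n * ((n:ℝ) + 2) : ℝ) : ℂ) * z ^ (n + 2) := by
      rw [← tsum_mul_left]
      exact tsum_congr fun n => by ring
    have hrw : η * (∑' n : ℕ, ((A n : ℝ) : ℂ) * z ^ (n + 2)) -
        z * (η * ∑' n : ℕ, ((A n * ((n:ℝ) + 2) : ℝ) : ℂ) * z ^ (n + 1))
        = -(η * ∑' n : ℕ, ((U n : ℝ) : ℂ) * z ^ (n + 2)) := by
      have hsub : (∑' n : ℕ, ((A n : ℝ) : ℂ) * z ^ (n + 2)) -
          (∑' n : ℕ, ((A n * ((n:ℝ) + 2) : ℝ) : ℂ) * z ^ (n + 2))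
          = ∑' n : ℕ, (-(((U n : ℝ) : ℂ) * z ^ (n + 2))) := by
        rw [← Summable.tsum_sub hS1 hS2]
        refine tsum_congr fun n => ?_
        have hcn : ((U n : ℝ) : ℂ) = ((A n : ℝ) : ℂ) * ((n:ℂ) + 1) := by
          rw [← hrel n]; push_cast; ring
        rw [hcn]; push_cast; ring
      rw [tsum_neg] at hsub
      calc η * (∑' n : ℕ, ((A n : ℝ) : ℂ) * z ^ (n + 2)) -
            z * (η * ∑' n : ℕ, ((A n * ((n:ℝ) + 2) : ℝ) : ℂ) * z ^ (n + 1))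
          = η * ((∑' n : ℕ, ((A n : ℝ) : ℂ) * z ^ (n + 2)) -
              z * (∑' n : ℕ, ((A n * ((n:ℝ) + 2) : ℝ) : ℂ) * z ^ (n + 1))) := by ring
        _ = η * (-(∑' n : ℕ, ((U n : ℝ) : ℂ) * z ^ (n + 2))) := by rw [hzD, hsub]
        _ = -(η * ∑' n : ℕ, ((U n : ℝ) : ℂ) * z ^ (n + 2)) := by ring
    rw [hrw, norm_neg]
    -- now bound the norm
    have hnorm_eq : ∀ n : ℕ, ‖((U n : ℝ) : ℂ) * z ^ (n + 2)‖ = U n * ‖z‖ ^ (n + 2) := by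
      intro n
      rw [norm_mul, norm_pow, Complex.norm_real, Real.norm_eq_abs,
        _root_.abs_of_nonneg (hUpos n).le]
    have hSnorm : Summable (fun n : ℕ => U n * ‖z‖ ^ (n + 2)) := by
      refine Summable.of_nonneg_of_le (fun n => mul_nonneg (hUpos n).le (pow_nonneg hzn _)) (fun n => ?_) hUsum
      calc U n * ‖z‖ ^ (n + 2) ≤ U n * 1 :=
            mul_le_mul_of_nonneg_left (pow_le_one₀ hzn hznorm.le) (hUpos n).le
        _ = U n := mul_one _
    have hbound : ‖∑' n : ℕ, ((U n : ℝ) : ℂ) * z ^ (n + 2)‖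
        ≤ (∑' n : ℕ, U n) * ‖z‖ ^ 2 := by
      calc ‖∑' n : ℕ, ((U n : ℝ) : ℂ) * z ^ (n + 2)‖
          ≤ ∑' n : ℕ, ‖((U n : ℝ) : ℂ) * z ^ (n + 2)‖ := by
            apply norm_tsum_le_tsum_norm
            refine hSnorm.congr fun n => (hnorm_eq n).symm
        _ = ∑' n : ℕ, U n * ‖z‖ ^ (n + 2) := tsum_congr hnorm_eq
        _ ≤ ∑' n : ℕ, U n * ‖z‖ ^ 2 := by
            refine Summable.tsum_le_tsum (fun n => ?_) hSnorm (hUsum.mul_right _)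
            have : ‖z‖ ^ (n + 2) = ‖z‖ ^ n * ‖z‖ ^ 2 := by rw [← pow_add]
            rw [this]
            calc U n * (‖z‖ ^ n * ‖z‖ ^ 2) ≤ U n * (1 * ‖z‖ ^ 2) := by
                  apply mul_le_mul_of_nonneg_left _ (hUpos n).le
                  apply mul_le_mul_of_nonneg_right (pow_le_one₀ hzn hznorm.le) (by positivity)
              _ = U n * ‖z‖ ^ 2 := by ring
        _ = (∑' n : ℕ, U n) * ‖z‖ ^ 2 := tsum_mul_right
    have hTnn : (0:ℝ) ≤ ∑' n : ℕ, U n := tsum_nonneg fun n => (hUpos n).le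
    have hfinal : ‖η * ∑' n : ℕ, ((U n : ℝ) : ℂ) * z ^ (n + 2)‖ < lam := by
      rw [norm_mul]
      calc ‖η‖ * ‖∑' n : ℕ, ((U n : ℝ) : ℂ) * z ^ (n + 2)‖
          ≤ ‖η‖ * ((∑' n : ℕ, U n) * ‖z‖ ^ 2) :=
            mul_le_mul_of_nonneg_left hbound (norm_nonneg η)
        _ ≤ ‖η‖ * ((∑' n : ℕ, U n) * 1) := by
            apply mul_le_mul_of_nonneg_left _ (norm_nonneg η)
            apply mul_le_mul_of_nonneg_left _ hTnn
            exact pow_le_one₀ hzn hznorm.le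
        _ = ‖η‖ * (∑' n : ℕ, U n) := by
            ring
        _ < lam := hcond
    linarith [hfinal]
end
end

section
/- Let λ > 0, let a, b, c be positive reals with c − a − b − 1 > 0, and let η ∈ ℂ with |η| < 1. Define g on 𝔻 by the convergent series g(z) = η · Σ_{n=2}^∞ [((a)_{n−1}(b)_{n−1}) / ((c)_{n−1} (n−1)!)] z^n, where (x)_m denotes the Pochhammer symbol, and set h(z) = z. If |η| · (ab/(c − a − b − 1)) · Σ_{n=0}^∞ ((a)_n (b)_n)/(n! (c)_n) < λ, then the harmonic function f_5 = h + conj∘g (equivalently f_5(z) = z + conj(η z (F(a,b;c;z) − 1)), where F is the Gaussian hypergeometric function) belongs to Ω_H^0(λ). -/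
open Complex

noncomputable section

section Real

variable {a b c : ℝ} (ha : 0 < a) (hb : 0 < b) (hc : 0 < c) (habc : 0 < c - a - b - 1)

/-- The coefficient sequence `d n = (a)_n (b)_n / (n! (c)_n)`. -/
def dconst (a b c : ℝ) (n : ℕ) : ℝ := poch a n * poch b n / (n.factorial * poch c n)

include ha hb hc in
lemma dconst_pos (n : ℕ) : 0 < dconst a b c n := by
  have := poch_pos ha n; have := poch_pos hb n; have := poch_pos hc n
  have : (0:ℝ) < n.factorial := by exact_mod_cast n.factorial_pos
  unfold dconst; positivity

include ha hb hc in
lemma dconst_rec (n : ℕ) :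
    ((n : ℝ) + 1) * (c + n) * dconst a b c (n + 1) = (a + n) * (b + n) * dconst a b c n := by
  have hfa : ((n.factorial : ℝ)) ≠ 0 := by exact_mod_cast n.factorial_pos.ne'
  have hpc : poch c n ≠ 0 := (poch_pos hc n).ne'
  have hcn : c + (n:ℝ) ≠ 0 := by positivity
  unfold dconst
  rw [poch_succ, poch_succ, poch_succ, Nat.factorial_succ]
  push_cast
  field_simp

end Real

theorem stmt15 (lam : ℝ) (hlam : 0 < lam) (a b c : ℝ)
    (ha : 0 < a) (hb : 0 < b) (hc : 0 < c) (habc : 0 < c - a - b - 1)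
    (η : ℂ) (hη : ‖η‖ < 1)
    (hcond : ‖η‖ * (a * b / (c - a - b - 1)) *
      (∑' n : ℕ, poch a n * poch b n / (n.factorial * poch c n)) < lam) :
    OmegaH0 lam (fun z => z)
      (fun z => η * ∑' n : ℕ,
        ((poch a (n + 1) * poch b (n + 1) / (poch c (n + 1) * (n + 1).factorial) : ℝ) : ℂ) *
          z ^ (n + 2)) := by
  set K : ℝ := c - a - b - 1 with hK
  set α : ℝ := a * b / K with hα
  set D : ℕ → ℝ := dconst a b c with hD
  have hDpos : ∀ n, 0 < D n := dconst_pos ha hb hc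
  have hc1 : 1 < c := by linarith
  have hα0 : 0 ≤ α := by
    rw [hα]; positivity
  -- the telescoping sequence
  set t : ℕ → ℝ := fun n => (n : ℝ) * ((n : ℝ) + c - 1) * D n / K with ht
  have ht0 : t 0 = 0 := by simp [ht]
  have htnn : ∀ n, 0 ≤ t n := by
    intro n
    have h1 : (0:ℝ) ≤ (n:ℝ) := n.cast_nonneg
    have h2 : (0:ℝ) < (n:ℝ) + c - 1 := by linarith
    have := (hDpos n).le
    rw [ht]; positivity
  have htdiff : ∀ n : ℕ, t n - t (n + 1) = ((n : ℝ) - α) * D n := by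
    intro n
    have hrec := dconst_rec ha hb hc (a := a) (b := b) (c := c) n
    have h1 : t (n + 1) = (a + n) * (b + n) * D n / K := by
      simp only [ht]
      push_cast
      rw [show ((n:ℝ) + 1) * (((n:ℝ) + 1) + c - 1) * D (n+1)
            = ((n:ℝ) + 1) * (c + (n:ℝ)) * D (n+1) by ring, hrec]
    rw [h1]
    simp only [ht, hα]
    field_simp
    ring
  have hTsum : ∀ N, ∑ n ∈ Finset.range N, (((n : ℝ)) - α) * D n = - t N := by
    intro N
    induction N with
    | zero => simp [ht0]
    | succ N ih =>
      rw [Finset.sum_range_succ, ih]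
      have := htdiff N
      linarith
  -- the index from which terms dominate
  set n₀ : ℕ := ⌈α⌉₊ + 1 with hn₀
  have hαn₀ : α + 1 ≤ (n₀ : ℝ) := by
    have := Nat.le_ceil α
    push_cast [hn₀]
    linarith
  have h1le : ∀ i : ℕ, 1 ≤ ((i + n₀ : ℕ) : ℝ) - α := by
    intro i
    have h0 : ((i + n₀ : ℕ) : ℝ) = (i : ℝ) + (n₀ : ℝ) := by exact_mod_cast rfl
    rw [h0]
    have h1 : (0:ℝ) ≤ (i : ℝ) := Nat.cast_nonneg i
    linarith
  have hshift_nonneg : ∀ i : ℕ, 0 ≤ (((i + n₀ : ℕ) : ℝ) - α) * D (i + n₀) := by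
    intro i
    exact mul_nonneg (by linarith [h1le i]) (hDpos _).le
  have hbound' : ∀ k, ∑ i ∈ Finset.range k, ((((i + n₀ : ℕ)) : ℝ) - α) * D (i + n₀) ≤ t n₀ := by
    intro k
    have h2 : ∑ i ∈ Finset.range k, ((((i + n₀ : ℕ)) : ℝ) - α) * D (i + n₀)
        = ∑ i ∈ Finset.range k, ((((n₀ + i : ℕ)) : ℝ) - α) * D (n₀ + i) :=
      Finset.sum_congr rfl fun i _ => by rw [Nat.add_comm i n₀]
    have h1 := Finset.sum_range_add (fun n : ℕ => (((n : ℕ) : ℝ) - α) * D n) n₀ k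
    have ha1 := hTsum (n₀ + k)
    have ha2 := hTsum n₀
    have ha3 := htnn (n₀ + k)
    rw [h2]
    linarith [h1, ha1, ha2, ha3]
  have hSummShift : Summable (fun i : ℕ => ((((i + n₀ : ℕ)) : ℝ) - α) * D (i + n₀)) :=
    summable_of_sum_range_le hshift_nonneg hbound'
  have hSummW : Summable (fun n : ℕ => (((n : ℝ)) - α) * D n) :=
    (summable_nat_add_iff n₀).mp hSummShift
  have hSummDshift : Summable (fun i : ℕ => D (i + n₀)) := by
    refine Summable.of_nonneg_of_le (fun i => (hDpos _).le) (fun i => ?_) hSummShift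
    have := h1le i
    nlinarith [(hDpos (i + n₀)).le]
  have hSummD : Summable D := (summable_nat_add_iff n₀).mp hSummDshift
  have hSummND : Summable (fun n : ℕ => (n : ℝ) * D n) := by
    have : (fun n : ℕ => (n : ℝ) * D n)
        = (fun n : ℕ => (((n : ℝ)) - α) * D n) + (fun n : ℕ => α * D n) := by
      funext n; simp [Pi.add_apply]; ring
    rw [this]
    exact hSummW.add (hSummD.mul_left α)
  have htsumW_le : ∑' n : ℕ, (((n : ℝ)) - α) * D n ≤ 0 := by
    have h1 : Filter.Tendsto (fun N => ∑ n ∈ Finset.range N, (((n : ℝ)) - α) * D n)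
        Filter.atTop (nhds (∑' n : ℕ, (((n : ℝ)) - α) * D n)) :=
      hSummW.hasSum.tendsto_sum_nat
    refine le_of_tendsto h1 (Filter.Eventually.of_forall fun N => ?_)
    rw [hTsum N]
    linarith [htnn N]
  have hkey : ∑' n : ℕ, (n : ℝ) * D n ≤ α * ∑' n : ℕ, D n := by
    have hsub : ∑' n : ℕ, (((n : ℝ)) - α) * D n
        = (∑' n : ℕ, (n : ℝ) * D n) - α * ∑' n : ℕ, D n := by
      rw [← tsum_mul_left (a := α) (f := D), ← hSummND.tsum_sub (hSummD.mul_left α)]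
      exact tsum_congr fun n => by ring
    linarith [htsumW_le, hsub ▸ htsumW_le]
  -- sequences used on the complex side
  have hSummE : Summable (fun n : ℕ => ((n : ℝ) + 1) * D (n + 1)) := by
    have := (summable_nat_add_iff 1).mpr hSummND
    refine this.congr fun n => ?_
    push_cast; ring
  have hSummDs : Summable (fun n : ℕ => D (n + 1)) := (summable_nat_add_iff 1).mpr hSummD
  have hSummU : Summable (fun n : ℕ => ((n : ℝ) + 2) * D (n + 1)) := by
    have : (fun n : ℕ => ((n : ℝ) + 2) * D (n + 1))
        = (fun n : ℕ => ((n : ℝ) + 1) * D (n + 1)) + (fun n : ℕ => D (n + 1)) := by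
      funext n; simp [Pi.add_apply]; ring
    rw [this]; exact hSummE.add hSummDs
  have hE_eq : ∑' n : ℕ, ((n : ℝ) + 1) * D (n + 1) = ∑' n : ℕ, (n : ℝ) * D n := by
    rw [hSummND.tsum_eq_zero_add]
    simp only [Nat.cast_zero, zero_mul, zero_add]
    exact (tsum_congr fun n => by push_cast; ring).symm
  -- rewrite the coefficients in the goal
  have hcoef : ∀ n : ℕ,
      (poch a (n + 1) * poch b (n + 1) / (poch c (n + 1) * (n + 1).factorial) : ℝ)
        = D (n + 1) := by
    intro n
    simp only [hD, dconst]
    rw [mul_comm (poch c (n+1)) ((n+1).factorial : ℝ)]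
  simp only [hcoef]
  -- basic facts about the disk
  have hUB : unitDisk = Metric.ball (0 : ℂ) 1 := by
    ext z
    simp [unitDisk, Metric.mem_ball, dist_zero_right]
  have hopen : IsOpen unitDisk := by rw [hUB]; exact Metric.isOpen_ball
  -- term-by-term derivative
  have hterm : ∀ (n : ℕ) (y : ℂ), y ∈ Metric.ball (0:ℂ) 1 →
      HasDerivAt (fun w : ℂ => ((D (n+1) : ℝ) : ℂ) * w ^ (n + 2))
        (((D (n+1) : ℝ) : ℂ) * (((n : ℂ) + 2) * y ^ (n + 1))) y := by
    intro n y _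
    have := (hasDerivAt_pow (n + 2) y).const_mul (((D (n+1) : ℝ) : ℂ))
    simpa [Nat.add_sub_cancel] using this
  have htermbd : ∀ (n : ℕ) (y : ℂ), y ∈ Metric.ball (0:ℂ) 1 →
      ‖((D (n+1) : ℝ) : ℂ) * (((n : ℂ) + 2) * y ^ (n + 1))‖ ≤ ((n : ℝ) + 2) * D (n + 1) := by
    intro n y hy
    have hy1 : ‖y‖ ≤ 1 := by
      rw [Metric.mem_ball, dist_zero_right] at hy; exact hy.le
    have hpow : ‖y‖ ^ (n + 1) ≤ 1 := pow_le_one₀ (norm_nonneg _) hy1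
    have h2 : ‖((n : ℂ) + 2)‖ = (n : ℝ) + 2 := by
      have : ((n : ℂ) + 2) = ((n + 2 : ℕ) : ℂ) := by push_cast; ring
      rw [this, Complex.norm_natCast]; push_cast; ring
    calc ‖((D (n+1) : ℝ) : ℂ) * (((n : ℂ) + 2) * y ^ (n + 1))‖
        = D (n + 1) * (((n : ℝ) + 2) * ‖y‖ ^ (n + 1)) := by
          rw [norm_mul, norm_mul, norm_pow, h2, Complex.norm_real,
            Real.norm_of_nonneg (hDpos (n+1)).le]
      _ ≤ D (n + 1) * (((n : ℝ) + 2) * 1) := by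
          have h3 : (0:ℝ) ≤ (n : ℝ) + 2 := by positivity
          exact mul_le_mul_of_nonneg_left
            (mul_le_mul_of_nonneg_left hpow h3) (hDpos (n+1)).le
      _ = ((n : ℝ) + 2) * D (n + 1) := by ring
  have hzero_summ : Summable (fun n : ℕ => ((D (n+1) : ℝ) : ℂ) * (0:ℂ) ^ (n + 2)) := by
    refine summable_zero.congr fun n => ?_
    simp
  have hderivS : ∀ z ∈ Metric.ball (0:ℂ) 1,
      HasDerivAt (fun w : ℂ => ∑' n : ℕ, ((D (n+1) : ℝ) : ℂ) * w ^ (n + 2))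
        (∑' n : ℕ, ((D (n+1) : ℝ) : ℂ) * (((n : ℂ) + 2) * z ^ (n + 1))) z := by
    intro z hz
    exact hasDerivAt_tsum_of_isPreconnected hSummU Metric.isOpen_ball
      (convex_ball (0:ℂ) 1).isPreconnected hterm htermbd
      (Metric.mem_ball_self one_pos) hzero_summ hz
  have hgderiv : ∀ z ∈ unitDisk,
      HasDerivAt (fun w : ℂ => η * ∑' n : ℕ, ((D (n+1) : ℝ) : ℂ) * w ^ (n + 2))
        (η * ∑' n : ℕ, ((D (n+1) : ℝ) : ℂ) * (((n : ℂ) + 2) * z ^ (n + 1))) z := by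
    intro z hz
    rw [hUB] at hz
    exact (hderivS z hz).const_mul η
  refine ⟨?_, ?_, ?_, ?_, ?_, ?_, ?_⟩
  · exact fun z _ => analyticAt_id
  · refine DifferentiableOn.analyticOnNhd (fun z hz => ?_) hopen
    exact ((hgderiv z hz).differentiableAt).differentiableWithinAt
  · rfl
  · simp
  · have : ∀ n : ℕ, ((D (n+1) : ℝ) : ℂ) * (0:ℂ) ^ (n + 2) = 0 := fun n => by simp
    simp only [this, tsum_zero, mul_zero]
  · have h0 : (0:ℂ) ∈ unitDisk := by simp [unitDisk]
    rw [(hgderiv 0 h0).deriv]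
    have : ∀ n : ℕ, ((D (n+1) : ℝ) : ℂ) * (((n : ℂ) + 2) * (0:ℂ) ^ (n + 1)) = 0 :=
      fun n => by simp
    simp only [this, tsum_zero, mul_zero]
  · intro z hz
    have hzlt : ‖z‖ < 1 := hz
    have hid : deriv (fun z : ℂ => z) z = 1 := by simp
    rw [hid, mul_one, sub_self, norm_zero]
    rw [(hgderiv z hz).deriv]
    -- reduce to a norm bound
    have hSummA : Summable (fun n : ℕ => ((D (n+1) : ℝ) : ℂ) * z ^ (n + 2)) := by
      refine Summable.of_norm_bounded hSummDs fun n => ?_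
      rw [norm_mul, norm_pow, Complex.norm_real, Real.norm_of_nonneg (hDpos (n+1)).le]
      have h4 : ‖z‖ ^ (n + 2) ≤ 1 := pow_le_one₀ (norm_nonneg _) (le_of_lt hzlt)
      calc D (n+1) * ‖z‖ ^ (n + 2) ≤ D (n+1) * 1 :=
            mul_le_mul_of_nonneg_left h4 (hDpos (n+1)).le
        _ = D (n+1) := mul_one _
    have hSummB : Summable (fun n : ℕ => z * (((D (n+1) : ℝ) : ℂ) * (((n : ℂ) + 2) * z ^ (n + 1)))) := by
      refine Summable.of_norm_bounded hSummU fun n => ?_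
      rw [norm_mul]
      have hb := htermbd n z (by rw [← hUB]; exact hz)
      have hz1 : ‖z‖ ≤ 1 := le_of_lt hzlt
      calc ‖z‖ * ‖((D (n+1) : ℝ) : ℂ) * (((n : ℂ) + 2) * z ^ (n + 1))‖
          ≤ 1 * (((n : ℝ) + 2) * D (n + 1)) := by
            refine mul_le_mul hz1 hb (norm_nonneg _) one_pos.le
        _ = ((n : ℝ) + 2) * D (n + 1) := one_mul _
    have hdiff : (∑' n : ℕ, ((D (n+1) : ℝ) : ℂ) * z ^ (n + 2))
        - z * (∑' n : ℕ, ((D (n+1) : ℝ) : ℂ) * (((n : ℂ) + 2) * z ^ (n + 1)))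
        = ∑' n : ℕ, (-(((n : ℂ) + 1)) * (((D (n+1) : ℝ) : ℂ) * z ^ (n + 2))) := by
      rw [← tsum_mul_left, ← hSummA.tsum_sub hSummB]
      exact tsum_congr fun n => by ring
    have hnormterm : ∀ n : ℕ,
        ‖(-(((n : ℂ) + 1)) * (((D (n+1) : ℝ) : ℂ) * z ^ (n + 2)))‖ ≤ ((n : ℝ) + 1) * D (n + 1) := by
      intro n
      have h1 : ‖(-(((n : ℂ) + 1)))‖ = (n : ℝ) + 1 := by
        rw [norm_neg]
        have : ((n : ℂ) + 1) = ((n + 1 : ℕ) : ℂ) := by push_cast; ring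
        rw [this, Complex.norm_natCast]; push_cast; ring
      rw [norm_mul, norm_mul, norm_pow, h1, Complex.norm_real,
        Real.norm_of_nonneg (hDpos (n+1)).le]
      have hzp : ‖z‖ ^ (n+2) ≤ 1 := pow_le_one₀ (norm_nonneg _) (le_of_lt hzlt)
      have h3 : (0:ℝ) ≤ ((n : ℝ) + 1) * D (n + 1) :=
        mul_nonneg (by positivity) (hDpos (n+1)).le
      calc ((n : ℝ) + 1) * (D (n+1) * ‖z‖ ^ (n + 2))
          = (((n : ℝ) + 1) * D (n+1)) * ‖z‖ ^ (n + 2) := by ring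
        _ ≤ (((n : ℝ) + 1) * D (n+1)) * 1 := mul_le_mul_of_nonneg_left hzp h3
        _ = ((n : ℝ) + 1) * D (n + 1) := mul_one _
    have hSummNorm : Summable (fun n : ℕ =>
        ‖(-(((n : ℂ) + 1)) * (((D (n+1) : ℝ) : ℂ) * z ^ (n + 2)))‖) :=
      Summable.of_nonneg_of_le (fun n => norm_nonneg _) hnormterm hSummE
    have hnormtsum : ‖∑' n : ℕ, (-(((n : ℂ) + 1)) * (((D (n+1) : ℝ) : ℂ) * z ^ (n + 2)))‖
        ≤ ∑' n : ℕ, ((n : ℝ) + 1) * D (n + 1) := by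
      refine le_trans (norm_tsum_le_tsum_norm hSummNorm) ?_
      exact Summable.tsum_le_tsum hnormterm hSummNorm hSummE
    -- assemble
    have habs : ‖η * (∑' n : ℕ, ((D (n+1) : ℝ) : ℂ) * z ^ (n + 2))
        - z * (η * ∑' n : ℕ, ((D (n+1) : ℝ) : ℂ) * (((n : ℂ) + 2) * z ^ (n + 1)))‖
        ≤ ‖η‖ * ∑' n : ℕ, ((n : ℝ) + 1) * D (n + 1) := by
      have heq : η * (∑' n : ℕ, ((D (n+1) : ℝ) : ℂ) * z ^ (n + 2))
          - z * (η * ∑' n : ℕ, ((D (n+1) : ℝ) : ℂ) * (((n : ℂ) + 2) * z ^ (n + 1)))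
          = η * ((∑' n : ℕ, ((D (n+1) : ℝ) : ℂ) * z ^ (n + 2))
            - z * (∑' n : ℕ, ((D (n+1) : ℝ) : ℂ) * (((n : ℂ) + 2) * z ^ (n + 1)))) := by ring
      rw [heq, hdiff]
      rw [norm_mul]
      gcongr
    have hfinal : ‖η‖ * ∑' n : ℕ, ((n : ℝ) + 1) * D (n + 1) < lam := by
      have h1 : ‖η‖ * ∑' n : ℕ, ((n : ℝ) + 1) * D (n + 1)
          ≤ ‖η‖ * (α * ∑' n : ℕ, D n) := by
        rw [hE_eq]
        exact mul_le_mul_of_nonneg_left hkey (norm_nonneg _)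
      have h2 : ‖η‖ * (α * ∑' n : ℕ, D n) < lam := by
        have : ‖η‖ * (a * b / (c - a - b - 1)) * (∑' n : ℕ, D n) < lam := hcond
        calc ‖η‖ * (α * ∑' n : ℕ, D n)
            = ‖η‖ * (a * b / (c - a - b - 1)) * (∑' n : ℕ, D n) := by
              rw [hα, hK]; ring
          _ < lam := this
      linarith
    have := lt_of_le_of_lt habs hfinal
    linarith
end
end
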